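/- Let C∞ be the poset (ω, ≥) (natural numbers with reversed order) with the Alexandrov topology of upward-closed sets (with respect to ≥, i.e., downward-closed with respect to the usual order). Then C∞ is a countable scattered space whose transfinite inductive dimension is ∞, i.e., dim(C∞) ≤ α fails for every ordinal α. -/
import Mathlib


/-- Transfinite inductive dimension: `DimLE α X` means `dim(X) ≤ α`. -/
def DimLE (α : Ordinal) (X : Type u) [TopologicalSpace X] : Prop :=
  ∀ x : X, ∀ U : Set X, IsOpen U → x ∈ U →
    ∃ V : Set X, IsOpen V ∧ x ∈ V ∧ V ⊆ U ∧
      ∃ β : Ordinal, ∃ _hβ : β < α, DimLE β ↥(closure V \ V)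
termination_by α
decreasing_by assumption

/-- The space `C∞`: the natural numbers with the Alexandrov topology of the reversed
order, i.e. the open sets are the sets downward closed with respect to the usual
order `≤` on `ℕ`. -/
def cinftyTop : TopologicalSpace ℕ where
  IsOpen S := IsLowerSet S
  isOpen_univ := isLowerSet_univ
  isOpen_inter _ _ hs ht := hs.inter ht
  isOpen_sUnion _ hS := isLowerSet_sUnion hS

/-- A topological space is scattered iff every nonempty subset has a point isolated in
the subspace topology. -/
def IsScatteredSpace (X : Type*) (t : TopologicalSpace X) : Prop :=
  ∀ S : Set X, S.Nonempty → ∃ x ∈ S, ∃ U : Set X, t.IsOpen U ∧ U ∩ S = {x}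

lemma dimLE_homeomorph (α : Ordinal) :
    ∀ {X Y : Type} [TopologicalSpace X] [TopologicalSpace Y] (_e : X ≃ₜ Y),
      DimLE α X → DimLE α Y := by
  induction α using Ordinal.induction with
  | _ α IH =>
    intro X Y _ _ e h
    rw [DimLE] at h ⊢
    intro y U hU hy
    obtain ⟨V, hVopen, hxV, hVU, β, hβ, hb⟩ :=
      h (e.symm y) (e ⁻¹' U) (hU.preimage e.continuous) (by simpa using hy)
    refine ⟨e '' V, e.isOpenMap _ hVopen, ⟨e.symm y, hxV, by simp⟩, ?_, β, hβ, ?_⟩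
    · rintro _ ⟨v, hv, rfl⟩; simpa using hVU hv
    · have him : closure (e '' V) \ e '' V = e '' (closure V \ V) := by
        rw [← e.image_closure, ← Set.image_diff e.injective]
      rw [him]
      exact IH β hβ (e.image _) hb

/-- `C∞` is a countable scattered space whose transfinite inductive dimension is `∞`:
`dim(C∞) ≤ α` fails for every ordinal `α`. -/
theorem cinfty_scattered_dim_infty :
    Countable ℕ ∧ IsScatteredSpace ℕ cinftyTop ∧
      ∀ α : Ordinal, ¬ @DimLE α ℕ cinftyTop := by
  refine ⟨inferInstance, ?_, ?_⟩
  · intro S hS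
    refine ⟨sInf S, Nat.sInf_mem hS, {n | n ≤ sInf S}, fun a b hba ha => le_trans hba ha, ?_⟩
    ext n
    simp only [Set.mem_inter_iff, Set.mem_setOf_eq, Set.mem_singleton_iff]
    constructor
    · rintro ⟨h1, h2⟩; exact le_antisymm h1 (Nat.sInf_le h2)
    · rintro rfl; exact ⟨le_refl _, Nat.sInf_mem hS⟩
  · intro α
    induction α using Ordinal.induction with
    | _ α IH =>
      intro h
      letI := cinftyTop
      rw [DimLE] at h
      have hopen : IsOpen ({0} : Set ℕ) := by
        show IsLowerSet _
        intro a b hba ha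
        simp only [Set.mem_singleton_iff] at ha ⊢
        omega
      obtain ⟨V, hV, h0V, hVsub, β, hβ, hb⟩ := h 0 {0} hopen rfl
      have hVeq : V = {0} := subset_antisymm hVsub (by
        intro n hn
        simp only [Set.mem_singleton_iff] at hn
        subst hn; exact h0V)
      subst hVeq
      have hcl : closure ({0} : Set ℕ) = Set.univ := by
        ext n
        simp only [Set.mem_univ, iff_true]
        rw [mem_closure_iff]
        intro o ho hno
        exact ⟨0, ho (Nat.zero_le n) hno, rfl⟩
      rw [hcl] at hb
      -- homeomorphism ↥(Set.univ \ {0}) ≃ₜ ℕ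
      have hsub : Continuous (fun n : ℕ => n - 1) := by
        rw [continuous_def]
        intro L hL
        show IsLowerSet _
        intro a b hba ha
        exact hL (Nat.sub_le_sub_right hba 1) ha
      have hadd : Continuous (fun n : ℕ => n + 1) := by
        rw [continuous_def]
        intro L hL
        show IsLowerSet _
        intro a b hba ha
        exact hL (Nat.add_le_add_right hba 1) ha
      let e : ↥(Set.univ \ ({0} : Set ℕ)) ≃ₜ ℕ :=
        { toFun := fun m => m.val - 1
          invFun := fun n => ⟨n + 1, Set.mem_univ _, Nat.succ_ne_zero n⟩
          left_inv := fun m => by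
            obtain ⟨m, -, hm⟩ := m
            have hm0 : m ≠ 0 := hm
            apply Subtype.ext
            show m - 1 + 1 = m
            omega
          right_inv := fun n => by simp
          continuous_toFun := hsub.comp continuous_subtype_val
          continuous_invFun := Continuous.subtype_mk hadd _ }
      exact IH β hβ (dimLE_homeomorph β e hb)
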